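/- Schröter's formula holds: θ₃(x; (r/L)τ) θ₃(y; ((L-r)/L)τ) = ∑_{k=0}^{L-1} exp(iπ(r/L)τ k²) exp(2πi k x) θ₃(x - y + (rk/L)τ; τ) θ₃((L-r)x + r y + (r(L-r)k/L)τ; r(L-r)τ). -/

import Mathlib

open Complex Real BigOperators

/-!
Expand the left-hand side as a double series over `(m, n) ∈ ℤ²`. Dividing `m + n = k + L q` with
`0 ≤ k < L` and putting `p = r q - n` identifies `ℤ²` with `Fin L × ℤ²`, and completing the square,
`r m² + (L - r) n² = r k² + L p² + 2 r k p + r (L - r) (L q² + 2 k q)`, splits each term into the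
`k`-th prefactor times the `(p, q)`-term of the product
`θ₃(x - y + (r k / L) τ; τ) θ₃((L - r) x + r y + (r (L - r) k / L) τ; r (L - r) τ)`.
Summing over `(p, q)` for each fixed `k` gives the formula.
-/

/-- The Jacobi theta function `θ₃(z;τ)`. -/
noncomputable def jacobiTheta₃ (z τ : ℂ) : ℂ :=
  ∑' k : ℤ, Complex.exp ((π : ℂ) * Complex.I * τ * (k : ℂ) ^ 2) *
    Complex.exp (2 * (π : ℂ) * Complex.I * (k : ℂ) * z)

lemma jacobiTheta₃_eq_jacobiTheta₂ (z τ : ℂ) : jacobiTheta₃ z τ = jacobiTheta₂ z τ := by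
  refine tsum_congr fun n => ?_
  rw [jacobiTheta₂_term, ← Complex.exp_add]
  ring_nf

lemma hasSum_jacobiTheta₂_term_mul {τ τ' : ℂ} (hτ : 0 < τ.im) (hτ' : 0 < τ'.im) (z z' : ℂ) :
    HasSum (fun mn : ℤ × ℤ => jacobiTheta₂_term mn.1 z τ * jacobiTheta₂_term mn.2 z' τ')
      (jacobiTheta₂ z τ * jacobiTheta₂ z' τ') := by
  have hs := ((summable_jacobiTheta₂_term_iff z τ).2 hτ).norm
  have hs' := ((summable_jacobiTheta₂_term_iff z' τ').2 hτ').norm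
  -- Elaborated against the goal, these terms send unification into unfolding `jacobiTheta₂_term`.
  have hsum := summable_mul_of_summable_norm hs hs'
  have hprod := (hasSum_jacobiTheta₂_term z hτ).mul (hasSum_jacobiTheta₂_term z' hτ') hsum
  exact hprod

def schroterEquiv (L : ℕ) [NeZero L] (r : ℤ) : Fin L × ℤ × ℤ ≃ ℤ × ℤ where
  toFun w := (w.1 + w.2.1 + (L - r) * w.2.2, r * w.2.2 - w.2.1)
  invFun v :=
    let d := Int.divModEquiv L (v.1 + v.2)
    (d.2, r * d.1 - v.2, d.1)
  left_inv := by
    rintro ⟨k, p, q⟩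
    have hsum : (k + p + (L - r) * q) + (r * q - p) = (Int.divModEquiv L).symm (q, k) := by
      rw [Int.divModEquiv_symm_apply]
      ring
    simp only [hsum, Equiv.apply_symm_apply]
    ring_nf
  right_inv := by
    rintro ⟨m, n⟩
    have hdiv := (Int.divModEquiv L).symm_apply_apply (m + n)
    rw [Int.divModEquiv_symm_apply] at hdiv
    ext
    · dsimp only
      linear_combination hdiv
    · dsimp only
      ring

lemma schroterEquiv_apply (L : ℕ) [NeZero L] (r : ℤ) (k : Fin L) (p q : ℤ) :
    schroterEquiv L r (k, p, q) = (k + p + (L - r) * q, r * q - p) :=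
  rfl

lemma jacobiTheta₂_term_mul_jacobiTheta₂_term_eq {L r k : ℂ} (hL : L ≠ 0) {m n p q : ℤ}
    (hm : (m : ℂ) = k + p + (L - r) * q) (hn : (n : ℂ) = r * q - p) (x y τ : ℂ) :
    jacobiTheta₂_term m x (r / L * τ) * jacobiTheta₂_term n y ((L - r) / L * τ) =
      cexp (π * I * (r / L) * τ * k ^ 2) * cexp (2 * π * I * k * x) *
        (jacobiTheta₂_term p (x - y + r * k / L * τ) τ *
          jacobiTheta₂_term q ((L - r) * x + r * y + r * (L - r) * k / L * τ)
            (r * (L - r) * τ)) := by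
  simp only [jacobiTheta₂_term, ← Complex.exp_add, hm, hn]
  congr 1
  field_simp
  ring

lemma im_schroter_moduli_pos {L r : ℕ} (hr : 0 < r) (hrL : r < L) {τ : ℂ} (hτ : 0 < τ.im) :
    0 < ((r : ℂ) / L * τ).im ∧ 0 < (((L : ℂ) - r) / L * τ).im ∧
      0 < ((r : ℂ) * ((L : ℂ) - r) * τ).im := by
  have hr' : (0 : ℝ) < r := Nat.cast_pos.2 hr
  have hLr : (0 : ℝ) < L - r := sub_pos.2 (Nat.cast_lt.2 hrL)
  have hL : (0 : ℝ) < L := hr'.trans (sub_pos.1 hLr)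
  simp only [mul_im, div_natCast_re, natCast_re, div_natCast_im, natCast_im, zero_div, zero_mul,
    add_zero, sub_re, sub_im, sub_self, mul_re, mul_zero, sub_zero]
  exact ⟨mul_pos (div_pos hr' hL) hτ, mul_pos (div_pos hLr hL) hτ, mul_pos (mul_pos hr' hLr) hτ⟩

/-- Schröter's formula. -/
theorem schroter_formula (L r : ℕ) (hr : 0 < r) (hrL : r < L) (τ : ℂ) (hτ : 0 < τ.im)
    (x y : ℂ) :
    jacobiTheta₃ x ((r : ℂ) / (L : ℂ) * τ) *
        jacobiTheta₃ y (((L : ℂ) - (r : ℂ)) / (L : ℂ) * τ) =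
      ∑ k ∈ Finset.range L,
        Complex.exp ((π : ℂ) * Complex.I * ((r : ℂ) / (L : ℂ)) * τ * (k : ℂ) ^ 2) *
          Complex.exp (2 * (π : ℂ) * Complex.I * (k : ℂ) * x) *
          jacobiTheta₃ (x - y + (r : ℂ) * (k : ℂ) / (L : ℂ) * τ) τ *
          jacobiTheta₃ (((L : ℂ) - (r : ℂ)) * x + (r : ℂ) * y +
              (r : ℂ) * ((L : ℂ) - (r : ℂ)) * (k : ℂ) / (L : ℂ) * τ)
            ((r : ℂ) * ((L : ℂ) - (r : ℂ)) * τ) := by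
  have : NeZero L := NeZero.of_pos (hr.trans hrL)
  have hL : (L : ℂ) ≠ 0 := NeZero.ne _
  obtain ⟨h₁, h₂, h₃⟩ := im_schroter_moduli_pos hr hrL hτ
  simp only [jacobiTheta₃_eq_jacobiTheta₂]
  rw [Finset.sum_range]
  have hprod := (schroterEquiv L r).hasSum_iff.2 (hasSum_jacobiTheta₂_term_mul h₁ h₂ x y)
  refine (hprod.prod_fiberwise fun k => ?_).unique (hasSum_fintype _)
  rw [mul_assoc]
  refine ((hasSum_jacobiTheta₂_term_mul hτ h₃ _ _).mul_left _).congr_fun fun ⟨p, q⟩ => ?_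
  exact jacobiTheta₂_term_mul_jacobiTheta₂_term_eq hL (by simp [schroterEquiv_apply])
    (by simp [schroterEquiv_apply]) x y τ
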